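/- Let n ≥ 2 and A a ring with enough idempotents. For any class C of unital left A-modules of type FP_n, the class ^⊤C = { N unital right A-module : Tor₁^A(N, F) = 0 for all F ∈ C } is closed under products (taken in the category of unital right A-modules). -/

import Mathlib

open MulOpposite

universe u v w w' w₂ w₃

namespace EIMod

/-- A premodule over a nonunital ring `A`: an additive group with an associative,
biadditive scalar multiplication. -/
class PreMod (A : Type u) (M : Type w) [NonUnitalRing A] [AddCommGroup M] extends SMul A M where
  smul_add' : ∀ (a : A) (m n : M), a • (m + n) = a • m + a • n
  add_smul' : ∀ (a b : A) (m : M), (a + b) • m = a • m + b • m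
  mul_smul' : ∀ (a b : A) (m : M), (a * b) • m = a • (b • m)

namespace PreMod

variable {A : Type u} [NonUnitalRing A]

section Lemmas

variable {M : Type w} [AddCommGroup M] [PreMod A M]

lemma psmul_zero (a : A) : a • (0 : M) = 0 := by
  have h := smul_add' a (0 : M) 0
  rw [add_zero] at h
  exact (left_eq_add.mp h)

lemma psmul_neg (a : A) (m : M) : a • (-m) = -(a • m) := by
  have h := smul_add' a m (-m)
  rw [add_neg_cancel, psmul_zero] at h
  exact (eq_neg_of_add_eq_zero_right h.symm)

lemma pzero_smul (m : M) : (0 : A) • m = 0 := by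
  have h := add_smul' (0 : A) 0 m
  rw [add_zero] at h
  exact (left_eq_add.mp h)

lemma pneg_smul (a : A) (m : M) : (-a) • m = -(a • m) := by
  have h := add_smul' a (-a) m
  rw [add_neg_cancel, pzero_smul] at h
  exact (eq_neg_of_add_eq_zero_right h.symm)

/-- Scalar multiplication by a fixed `a : A` as an additive map. -/
def smulHom (M : Type w) [AddCommGroup M] [PreMod A M] (a : A) : M →+ M :=
  AddMonoidHom.mk' (fun m => a • m) (smul_add' a)

@[simp] lemma smulHom_apply (a : A) (m : M) : smulHom M a m = a • m := rfl

end Lemmas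

instance : PreMod A A where
  smul := (· * ·)
  smul_add' := mul_add
  add_smul' := add_mul
  mul_smul' := mul_assoc

lemma smul_def (a b : A) : a • b = a * b := rfl

instance : PreMod Aᵐᵒᵖ A where
  smul a x := x * a.unop
  smul_add' a m n := add_mul m n a.unop
  add_smul' a b m := by show m * (a + b).unop = m * a.unop + m * b.unop; rw [unop_add, mul_add]
  mul_smul' a b m := by
    show m * (a * b).unop = (m * b.unop) * a.unop
    rw [unop_mul, mul_assoc]

lemma op_smul_def (a : Aᵐᵒᵖ) (x : A) : a • x = x * a.unop := rfl

instance instPi {ι : Type v} (β : ι → Type w) [∀ i, AddCommGroup (β i)]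
    [∀ i, PreMod A (β i)] : PreMod A (∀ i, β i) where
  smul a f i := a • f i
  smul_add' a f g := funext fun i => smul_add' a (f i) (g i)
  add_smul' a b f := funext fun i => add_smul' a b (f i)
  mul_smul' a b f := funext fun i => mul_smul' a b (f i)

lemma pi_smul_apply {ι : Type v} {β : ι → Type w} [∀ i, AddCommGroup (β i)]
    [∀ i, PreMod A (β i)] (a : A) (f : ∀ i, β i) (i : ι) : (a • f) i = a • f i := rfl

noncomputable instance instFinsupp {σ : Type v} : PreMod A (σ →₀ A) where
  smul a f := Finsupp.mapRange (a * ·) (mul_zero a) f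
  smul_add' a f g := by
    ext s
    simp [Finsupp.mapRange_apply, mul_add]
  add_smul' a b f := by
    ext s
    simp [Finsupp.mapRange_apply, add_mul]
  mul_smul' a b f := by
    ext s
    simp [Finsupp.mapRange_apply, mul_assoc]

lemma finsupp_smul_single {σ : Type v} (a : A) (s : σ) (b : A) :
    a • (Finsupp.single s b) = Finsupp.single s (a * b) := by
  show Finsupp.mapRange (a * ·) (mul_zero a) (Finsupp.single s b) = _
  rw [Finsupp.mapRange_single]

end PreMod

open PreMod

variable (A : Type u) [NonUnitalRing A]

/-- The additive subgroup of `A`-linear additive maps between two premodules. -/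
def LHom (M : Type w) (N : Type w') [AddCommGroup M] [AddCommGroup N]
    [PreMod A M] [PreMod A N] : AddSubgroup (M →+ N) where
  carrier := {f | ∀ (a : A) (m : M), f (a • m) = a • f m}
  add_mem' := by
    intro f g hf hg a m
    simp only [AddMonoidHom.add_apply, hf a m, hg a m, PreMod.smul_add']
  zero_mem' := by
    intro a m
    simp [PreMod.psmul_zero]
  neg_mem' := by
    intro f hf a m
    simp [hf a m, PreMod.psmul_neg]

lemma mem_LHom {M : Type w} {N : Type w'} [AddCommGroup M] [AddCommGroup N]
    [PreMod A M] [PreMod A N] (f : M →+ N) :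
    f ∈ LHom A M N ↔ ∀ (a : A) (m : M), f (a • m) = a • f m := Iff.rfl

/-- A complete family of orthogonal idempotents for a nonunital ring:
`A` is a ring with enough idempotents. -/
class EnoughIdems {I : Type v} (e : I → A) : Prop where
  idem : ∀ i, e i * e i = e i
  orth : ∀ i j, i ≠ j → e i * e j = 0
  memLeft : ∀ a : A, a ∈ AddSubgroup.closure {x : A | ∃ i b, x = e i * b}
  memRight : ∀ a : A, a ∈ AddSubgroup.closure {x : A | ∃ i b, x = b * e i}

section OpInstance

variable {A}

lemma op_mem_closure {s : Set A} {t : Set Aᵐᵒᵖ} (hst : ∀ x ∈ s, op x ∈ t) {a : A}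
    (ha : a ∈ AddSubgroup.closure s) : op a ∈ AddSubgroup.closure t := by
  refine AddSubgroup.closure_induction
    (fun x hx => AddSubgroup.subset_closure (hst x hx)) (by rw [op_zero]; exact zero_mem _)
    (fun x y _ _ hx hy => by rw [op_add]; exact add_mem hx hy)
    (fun x _ hx => by rw [op_neg]; exact neg_mem hx) ha

lemma unop_mem_closure {s : Set Aᵐᵒᵖ} {t : Set A} (hst : ∀ x ∈ s, unop x ∈ t) {a : Aᵐᵒᵖ}
    (ha : a ∈ AddSubgroup.closure s) : unop a ∈ AddSubgroup.closure t := by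
  refine AddSubgroup.closure_induction
    (fun x hx => AddSubgroup.subset_closure (hst x hx)) (by rw [unop_zero]; exact zero_mem _)
    (fun x y _ _ hx hy => by rw [unop_add]; exact add_mem hx hy)
    (fun x _ hx => by rw [unop_neg]; exact neg_mem hx) ha

instance EnoughIdems.instOp {I : Type v} (e : I → A) [EnoughIdems A e] :
    EnoughIdems Aᵐᵒᵖ (fun i => op (e i)) where
  idem i := by rw [← op_mul, idem (e := e) i]
  orth i j h := by
    rw [← op_mul, orth (e := e) j i (Ne.symm h), op_zero]
  memLeft a := by
    have := op_mem_closure (s := {x : A | ∃ i b, x = b * e i})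
      (t := {x : Aᵐᵒᵖ | ∃ i b, x = op (e i) * b}) ?_ (memRight (e := e) a.unop)
    · simpa using this
    · rintro x ⟨i, b, rfl⟩
      exact ⟨i, op b, by rw [← op_mul]⟩
  memRight a := by
    have := op_mem_closure (s := {x : A | ∃ i b, x = e i * b})
      (t := {x : Aᵐᵒᵖ | ∃ i b, x = b * op (e i)}) ?_ (memLeft (e := e) a.unop)
    · simpa using this
    · rintro x ⟨i, b, rfl⟩
      exact ⟨i, op b, by rw [← op_mul]⟩

end OpInstance

section RA

variable {I : Type v} (e : I → A)

/-- `R_A(M) = ⊕ᵢ eᵢ M`, the largest unital submodule of a premodule `M`. -/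
def RA (M : Type w) [AddCommGroup M] [PreMod A M] : AddSubgroup M :=
  AddSubgroup.closure {x : M | ∃ (i : I) (y : M), x = e i • y}

variable {M : Type w} [AddCommGroup M] [PreMod A M]

lemma smul_mem_RA [EnoughIdems A e] (a : A) {m : M} (hm : m ∈ RA A e M) :
    a • m ∈ RA A e M := by
  have key : ∀ b : A, b ∈ AddSubgroup.closure {x : A | ∃ i c, x = e i * c} →
      ∀ y : M, b • y ∈ RA A e M := by
    intro b hb
    refine AddSubgroup.closure_induction ?_ ?_ ?_ ?_ hb
    · rintro x ⟨i, c, rfl⟩ y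
      rw [PreMod.mul_smul']
      exact AddSubgroup.subset_closure ⟨i, c • y, rfl⟩
    · intro y
      rw [PreMod.pzero_smul]
      exact zero_mem _
    · intro x y _ _ hx hy z
      rw [PreMod.add_smul']
      exact add_mem (hx z) (hy z)
    · intro x _ hx y
      rw [PreMod.pneg_smul]
      exact neg_mem (hx y)
  refine AddSubgroup.closure_induction ?_ ?_ ?_ ?_ hm
  · rintro x ⟨i, y, rfl⟩
    rw [← PreMod.mul_smul']
    exact key _ (EnoughIdems.memLeft (e := e) (a * e i)) y
  · rw [PreMod.psmul_zero]
    exact zero_mem _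
  · intro x y _ _ hx hy
    rw [PreMod.smul_add']
    exact add_mem hx hy
  · intro x _ hx
    rw [PreMod.psmul_neg]
    exact neg_mem hx

instance RA.instPreMod [EnoughIdems A e] : PreMod A ↥(RA A e M) where
  smul a x := ⟨a • x.1, smul_mem_RA A e a x.2⟩
  smul_add' a x y := Subtype.ext (PreMod.smul_add' a x.1 y.1)
  add_smul' a b x := Subtype.ext (PreMod.add_smul' a b x.1)
  mul_smul' a b x := Subtype.ext (PreMod.mul_smul' a b x.1)

lemma RA.coe_smul [EnoughIdems A e] (a : A) (x : ↥(RA A e M)) :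
    ((a • x : ↥(RA A e M)) : M) = a • (x : M) := rfl

/-- A premodule is unital when it coincides with its largest unital submodule. -/
def IsUnital (M : Type w) [AddCommGroup M] [PreMod A M] : Prop :=
  ∀ m : M, m ∈ RA A e M

end RA

section Ideals

/-- The left ideal `A·u = {x | x·u = x}` (for `u` idempotent), as a left premodule. -/
def rIdl (u : A) : AddSubgroup A where
  carrier := {x | x * u = x}
  zero_mem' := zero_mul u
  add_mem' := by
    intro x y hx hy
    show (x + y) * u = x + y
    rw [add_mul, hx, hy]
  neg_mem' := by
    intro x hx
    show (-x) * u = -x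
    rw [neg_mul, hx]

instance rIdl.instPreMod (u : A) : PreMod A ↥(rIdl A u) where
  smul a x := ⟨a * x.1, by
    have hx : x.1 * u = x.1 := x.2
    show (a * x.1) * u = a * x.1
    rw [mul_assoc, hx]⟩
  smul_add' a x y := Subtype.ext (mul_add a x.1 y.1)
  add_smul' a b x := Subtype.ext (add_mul a b x.1)
  mul_smul' a b x := Subtype.ext (mul_assoc a b x.1)

/-- The right ideal `u·A = {x | u·x = x}` (for `u` idempotent), as a right premodule. -/
def eIdl (u : A) : AddSubgroup A where
  carrier := {x | u * x = x}
  zero_mem' := mul_zero u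
  add_mem' := by
    intro x y hx hy
    show u * (x + y) = x + y
    rw [mul_add, hx, hy]
  neg_mem' := by
    intro x hx
    show u * (-x) = -x
    rw [mul_neg, hx]

instance eIdl.instPreMod (u : A) : PreMod Aᵐᵒᵖ ↥(eIdl A u) where
  smul a x := ⟨x.1 * a.unop, by
    have hx : u * x.1 = x.1 := x.2
    show u * (x.1 * a.unop) = x.1 * a.unop
    rw [← mul_assoc, hx]⟩
  smul_add' a x y := Subtype.ext (add_mul x.1 y.1 a.unop)
  add_smul' a b x := Subtype.ext (by show x.1 * (a + b).unop = x.1 * a.unop + x.1 * b.unop; rw [unop_add, mul_add])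
  mul_smul' a b x := Subtype.ext (by show x.1 * (a * b).unop = (x.1 * b.unop) * a.unop; rw [unop_mul, mul_assoc])

/-- The image `u•M` of scalar multiplication by `u`, as an additive subgroup. -/
def eSMulRange (u : A) (M : Type w) [AddCommGroup M] [PreMod A M] : AddSubgroup M :=
  (PreMod.smulHom M u).range

end Ideals

end EIMod
namespace EIMod

open PreMod MulOpposite

section Tensor

variable (A : Type u) [NonUnitalRing A]
variable (N : Type w) [AddCommGroup N] [PreMod Aᵐᵒᵖ N]
variable (M : Type w') [AddCommGroup M] [PreMod A M]

/-- Bilinearity and balancing relations defining the tensor product `N ⊗_A M`. -/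
def TensorRels : AddSubgroup (FreeAbelianGroup (N × M)) :=
  AddSubgroup.closure
    ({z | ∃ (n₁ : N) (n₂ : N) (m : M), z = FreeAbelianGroup.of (n₁ + n₂, m)
        - FreeAbelianGroup.of (n₁, m) - FreeAbelianGroup.of (n₂, m)} ∪
     {z | ∃ (n : N) (m₁ : M) (m₂ : M), z = FreeAbelianGroup.of (n, m₁ + m₂)
        - FreeAbelianGroup.of (n, m₁) - FreeAbelianGroup.of (n, m₂)} ∪
     {z | ∃ (n : N) (a : A) (m : M), z = FreeAbelianGroup.of (op a • n, m)
        - FreeAbelianGroup.of (n, a • m)})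

/-- The tensor product `N ⊗_A M` of a right `A`-premodule and a left `A`-premodule. -/
def Tensor : Type max w w' := FreeAbelianGroup (N × M) ⧸ TensorRels A N M

instance : AddCommGroup (Tensor A N M) :=
  inferInstanceAs (AddCommGroup (FreeAbelianGroup (N × M) ⧸ TensorRels A N M))

/-- The canonical generator `n ⊗ m` of `N ⊗_A M`. -/
def Tensor.mk (n : N) (m : M) : Tensor A N M :=
  QuotientAddGroup.mk (FreeAbelianGroup.of (n, m))

variable {A N M}
variable {N' : Type w₂} [AddCommGroup N'] [PreMod Aᵐᵒᵖ N']
variable {M' : Type w₃} [AddCommGroup M'] [PreMod A M']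

/-- Functoriality of the tensor product in both variables, with respect to `A`-linear maps. -/
noncomputable def Tensor.map (f : N →+ N') (g : M →+ M')
    (hf : ∀ (a : A) (n : N), f (op a • n) = op a • f n)
    (hg : ∀ (a : A) (m : M), g (a • m) = a • g m) :
    Tensor A N M →+ Tensor A N' M' :=
  QuotientAddGroup.map _ _ (FreeAbelianGroup.lift fun p => FreeAbelianGroup.of (f p.1, g p.2))
    (by
      refine (AddSubgroup.closure_le _).mpr ?_
      rintro z ((⟨n₁, n₂, m, rfl⟩ | ⟨n, m₁, m₂, rfl⟩) | ⟨n, a, m, rfl⟩) <;>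
        refine AddSubgroup.mem_comap.mpr ?_
      · rw [map_sub, map_sub, FreeAbelianGroup.lift_apply_of, FreeAbelianGroup.lift_apply_of,
          FreeAbelianGroup.lift_apply_of]
        exact AddSubgroup.subset_closure
          (Or.inl (Or.inl ⟨f n₁, f n₂, g m, by rw [map_add]⟩))
      · rw [map_sub, map_sub, FreeAbelianGroup.lift_apply_of, FreeAbelianGroup.lift_apply_of,
          FreeAbelianGroup.lift_apply_of]
        exact AddSubgroup.subset_closure
          (Or.inl (Or.inr ⟨f n, g m₁, g m₂, by rw [map_add]⟩))
      · rw [map_sub, FreeAbelianGroup.lift_apply_of, FreeAbelianGroup.lift_apply_of]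
        exact AddSubgroup.subset_closure
          (Or.inr ⟨f n, a, g m, by rw [hf, hg]⟩))

lemma Tensor.map_mk (f : N →+ N') (g : M →+ M')
    (hf : ∀ (a : A) (n : N), f (op a • n) = op a • f n)
    (hg : ∀ (a : A) (m : M), g (a • m) = a • g m) (n : N) (m : M) :
    Tensor.map f g hf hg (Tensor.mk A N M n m) = Tensor.mk A N' M' (f n) (g m) := by
  show QuotientAddGroup.map _ _ _ _ _ = _
  rw [Tensor.mk]
  exact (QuotientAddGroup.map_mk ..).trans (congrArg _ (FreeAbelianGroup.lift_apply_of _ _))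

end Tensor

section TorExt

variable (A : Type u) [NonUnitalRing A] {I : Type v} (e : I → A)
variable (M : Type w) [AddCommGroup M] [PreMod A M]

/-- The canonical `A`-linear surjection from the canonical free cover
`(I × M) →₀ A` onto a unital module `M`, `single (i, m) a ↦ (a·eᵢ)·m`. -/
noncomputable def covHom : ((I × M) →₀ A) →+ M :=
  Finsupp.liftAddHom (fun p =>
    AddMonoidHom.mk' (fun a => (a * e p.1) • p.2)
      (fun a b => by
        show ((a + b) * e p.1) • p.2 = (a * e p.1) • p.2 + (b * e p.1) • p.2
        rw [add_mul, PreMod.add_smul']))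

lemma covHom_single (p : I × M) (a : A) :
    covHom A e M (Finsupp.single p a) = (a * e p.1) • p.2 := by
  rw [covHom, Finsupp.liftAddHom_apply_single]
  rfl

lemma covHom_linear (a : A) (f : (I × M) →₀ A) :
    covHom A e M (a • f) = a • covHom A e M f := by
  induction f using Finsupp.induction with
  | zero => rw [PreMod.psmul_zero, map_zero, PreMod.psmul_zero]
  | single_add p b f _ _ ih =>
    rw [PreMod.smul_add', map_add, map_add, PreMod.smul_add', ih,
      PreMod.finsupp_smul_single, covHom_single, covHom_single, mul_assoc,
      PreMod.mul_smul']

/-- The first syzygy of the canonical free cover of `M`. -/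
noncomputable def KK : AddSubgroup ((I × M) →₀ A) := (covHom A e M).ker

noncomputable instance KK.instPreMod : PreMod A ↥(KK A e M) where
  smul a x := ⟨a • x.1, by
    have hx : covHom A e M x.1 = 0 := x.2
    show covHom A e M (a • x.1) = 0
    rw [covHom_linear, hx, PreMod.psmul_zero]⟩
  smul_add' a x y := Subtype.ext (PreMod.smul_add' a x.1 y.1)
  add_smul' a b x := Subtype.ext (PreMod.add_smul' a b x.1)
  mul_smul' a b x := Subtype.ext (PreMod.mul_smul' a b x.1)

variable (N : Type w') [AddCommGroup N] [PreMod Aᵐᵒᵖ N]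

/-- The map `N ⊗_A K → N ⊗_A (⊕ A·eᵢ)` induced by the first syzygy of `M`. -/
noncomputable def torMap : Tensor A N ↥(KK A e M) →+ Tensor A N ((I × M) →₀ A) :=
  Tensor.map (AddMonoidHom.id N) ((KK A e M).subtype) (fun _ _ => rfl) (fun _ _ => rfl)

/-- `Tor₁^A(N, M)`, computed using the canonical free presentation of `M`. -/
noncomputable def Tor1 : AddSubgroup (Tensor A N ↥(KK A e M)) := (torMap A e M N).ker

variable (X : Type w') [AddCommGroup X] [PreMod A X]

/-- Restriction of `A`-linear maps along the inclusion of the first syzygy of `M`. -/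
noncomputable def resHom :
    ↥(LHom A ((I × M) →₀ A) X) →+ ↥(LHom A ↥(KK A e M) X) :=
  AddMonoidHom.mk'
    (fun g => ⟨((g : ((I × M) →₀ A) →+ X)).comp (KK A e M).subtype,
      fun a k => (g.2 : ∀ (a : A) (y : (I × M) →₀ A), (g : ((I × M) →₀ A) →+ X) (a • y)
        = a • (g : ((I × M) →₀ A) →+ X) y) a k.1⟩)
    (fun g g' => Subtype.ext (AddMonoidHom.ext (fun k => rfl)))

/-- `Ext¹_A(M, X)`, computed using the canonical free presentation of `M`. -/
noncomputable def Ext1 :=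
  (↥(LHom A ↥(KK A e M) X)) ⧸ (resHom A e M X).range

noncomputable instance : AddCommGroup (Ext1 A e M X) :=
  inferInstanceAs (AddCommGroup ((↥(LHom A ↥(KK A e M) X)) ⧸ (resHom A e M X).range))

end TorExt

section Character

/-- The divisible group `ℚ/ℤ`. -/
abbrev QZ : Type := AddCircle (1 : ℚ)

variable (A : Type u) [NonUnitalRing A] {I : Type v} (e : I → A)
variable (N : Type w) [AddCommGroup N] [PreMod Aᵐᵒᵖ N]

/-- The full character premodule `Hom_ℤ(N, ℚ/ℤ)` of a right `A`-premodule `N`,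
with action `(a·f)(n) = f(n·a)`. -/
instance instCharPreMod : PreMod A (N →+ QZ) where
  smul a f := f.comp (PreMod.smulHom N (op a))
  smul_add' a f g := by
    show (f + g).comp _ = f.comp _ + g.comp _
    rw [AddMonoidHom.add_comp]
  add_smul' a b f := by
    ext n
    show f (op (a + b) • n) = f (op a • n) + f (op b • n)
    rw [op_add, PreMod.add_smul', map_add]
  mul_smul' a b f := by
    ext n
    show f (op (a * b) • n) = f (op b • (op a • n))
    rw [op_mul, PreMod.mul_smul']

lemma char_smul_apply (a : A) (f : N →+ QZ) (n : N) :
    (a • f) n = f (op a • n) := rfl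

/-- The unital character module `N⁺ = ⊕ᵢ Hom_ℤ(N·eᵢ, ℚ/ℤ) = R_A(Hom_ℤ(N, ℚ/ℤ))`. -/
noncomputable abbrev CharMod [EnoughIdems A e] : Type w :=
  ↥(RA A e (N →+ QZ))

end Character

section FPn

variable (A : Type u) [NonUnitalRing A] {I : Type v} (e : I → A)

/-- A finite direct sum of standard left ideals `A·u j`. -/
abbrev FinFree {k : ℕ} (u : Fin k → A) : Type u := ∀ j : Fin k, ↥(rIdl A (u j))

/-- A left premodule over a ring with enough idempotents is of type `FPₙ` if it admits an
exact resolution `Pₙ → ⋯ → P₀ → F → 0` whose terms are finite direct sums of the standard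
projective modules `A·eᵢ`. -/
def IsFPn (n : ℕ) (F : Type w) [AddCommGroup F] [PreMod A F] : Prop :=
  ∃ (k : ℕ → ℕ) (ι : ∀ s : ℕ, Fin (k s) → I)
    (d : ∀ s : ℕ, ↥(LHom A (FinFree A fun j => e (ι (s + 1) j))
          (FinFree A fun j => e (ι s j))))
    (g : ↥(LHom A (FinFree A fun j => e (ι 0 j)) F)),
    Function.Surjective ⇑(g : (FinFree A fun j => e (ι 0 j)) →+ F) ∧
    (0 < n → AddMonoidHom.range
        ((d 0 : (FinFree A fun j => e (ι 1 j)) →+ (FinFree A fun j => e (ι 0 j))))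
      = AddMonoidHom.ker (g : (FinFree A fun j => e (ι 0 j)) →+ F)) ∧
    (∀ s : ℕ, s + 1 < n → AddMonoidHom.range
        ((d (s + 1) : (FinFree A fun j => e (ι (s + 2) j)) →+ (FinFree A fun j => e (ι (s + 1) j))))
      = AddMonoidHom.ker
        ((d s : (FinFree A fun j => e (ι (s + 1) j)) →+ (FinFree A fun j => e (ι s j)))))

end FPn

end EIMod

open EIMod PreMod MulOpposite

set_option maxHeartbeats 1000000

/-!
`Tor₁(N, F)` can be computed from any presentation `0 → K → P₀ → F → 0` with `P₀` a finite sum of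
modules `A eᵢ`: maps over `F` in both directions between `P₀` and the canonical free cover compare
the two injectivity conditions, as in Schanuel's lemma. Since `N ⊗ (⊕ⱼ A uⱼ) ≅ ⊕ⱼ N uⱼ`, tensoring
with such modules commutes with unital products, and right exactness along `P₂ → P₁ → K → 0` then
makes `T ⊗ K → ∏ (N α ⊗ K)` injective for the unital product `T`. An element of `T ⊗ K` that dies
in `T ⊗ P₀` therefore dies in every `N α ⊗ K`, where `Tor₁(N α, F) = 0`, so it is zero.
-/

namespace EIMod

universe x₁ x₂ x₃ x₄

variable {A : Type u} [NonUnitalRing A]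

section Linear

variable {M : Type x₁} {M₂ : Type x₂} {M₃ : Type x₃}
  [AddCommGroup M] [AddCommGroup M₂] [AddCommGroup M₃] [PreMod A M] [PreMod A M₂] [PreMod A M₃]

lemma LHom.map_smul {f : M →+ M₂} (hf : f ∈ LHom A M M₂) (a : A) (m : M) :
    f (a • m) = a • f m :=
  (mem_LHom A f).1 hf a m

lemma LHom.comp_mem {g : M₂ →+ M₃} {f : M →+ M₂} (hg : g ∈ LHom A M₂ M₃)
    (hf : f ∈ LHom A M M₂) : g.comp f ∈ LHom A M M₃ := fun a m => by
  simp only [AddMonoidHom.comp_apply, LHom.map_smul hf, LHom.map_smul hg]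

lemma LHom.sub_mem {f g : M →+ M₂} (hf : f ∈ LHom A M M₂) (hg : g ∈ LHom A M M₂) :
    f - g ∈ LHom A M M₂ :=
  AddSubgroup.sub_mem _ hf hg

-- Not an instance: it depends on the proof of linearity.
abbrev kerPreMod (f : M →+ M₂) (hf : f ∈ LHom A M M₂) : PreMod A f.ker where
  smul a x := ⟨a • (x : M), by
    rw [AddMonoidHom.mem_ker, LHom.map_smul hf, AddMonoidHom.mem_ker.mp x.2, psmul_zero]⟩
  smul_add' a x y := Subtype.ext (smul_add' a (x : M) y)
  add_smul' a b x := Subtype.ext (add_smul' a b (x : M))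
  mul_smul' a b x := Subtype.ext (mul_smul' a b (x : M))

lemma ker_subtype_mem_LHom (f : M →+ M₂) (hf : f ∈ LHom A M M₂) :
    letI := kerPreMod f hf
    f.ker.subtype ∈ LHom A f.ker M :=
  fun _ _ => rfl

end Linear

namespace Tensor

variable {N : Type w} [AddCommGroup N] [PreMod Aᵐᵒᵖ N]
variable {M : Type w'} [AddCommGroup M] [PreMod A M]

@[elab_as_elim]
lemma induction_on {motive : Tensor A N M → Prop} (x : Tensor A N M)
    (mk : ∀ n m, motive (Tensor.mk A N M n m))
    (add : ∀ x y, motive x → motive y → motive (x + y))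
    (neg : ∀ x, motive x → motive (-x)) : motive x := by
  obtain ⟨w, rfl⟩ := QuotientAddGroup.mk_surjective (s := TensorRels A N M) x
  induction w using FreeAbelianGroup.induction_on with
  | zero =>
    have h := add _ _ (mk 0 0) (neg _ (mk 0 0))
    rwa [add_neg_cancel] at h
  | of p => exact mk p.1 p.2
  | neg p h => exact neg _ h
  | add a b ha hb => exact add _ _ ha hb

@[ext]
lemma addHom_ext {G : Type x₁} [AddCommGroup G] {f g : Tensor A N M →+ G}
    (h : ∀ n m, f (Tensor.mk A N M n m) = g (Tensor.mk A N M n m)) : f = g :=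
  QuotientAddGroup.addMonoidHom_ext _ (FreeAbelianGroup.lift_ext _ _ fun p => h p.1 p.2)

lemma mk_add_left (n₁ n₂ : N) (m : M) :
    Tensor.mk A N M (n₁ + n₂) m = Tensor.mk A N M n₁ m + Tensor.mk A N M n₂ m := by
  show QuotientAddGroup.mk _ = QuotientAddGroup.mk
    (FreeAbelianGroup.of (n₁, m) + FreeAbelianGroup.of (n₂, m))
  rw [QuotientAddGroup.eq_iff_sub_mem, sub_add_eq_sub_sub]
  exact AddSubgroup.subset_closure (Or.inl (Or.inl ⟨n₁, n₂, m, rfl⟩))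

lemma mk_add_right (n : N) (m₁ m₂ : M) :
    Tensor.mk A N M n (m₁ + m₂) = Tensor.mk A N M n m₁ + Tensor.mk A N M n m₂ := by
  show QuotientAddGroup.mk _ = QuotientAddGroup.mk
    (FreeAbelianGroup.of (n, m₁) + FreeAbelianGroup.of (n, m₂))
  rw [QuotientAddGroup.eq_iff_sub_mem, sub_add_eq_sub_sub]
  exact AddSubgroup.subset_closure (Or.inl (Or.inr ⟨n, m₁, m₂, rfl⟩))

lemma mk_op_smul (a : A) (n : N) (m : M) :
    Tensor.mk A N M (op a • n) m = Tensor.mk A N M n (a • m) := by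
  show QuotientAddGroup.mk _ = QuotientAddGroup.mk _
  rw [QuotientAddGroup.eq_iff_sub_mem]
  exact AddSubgroup.subset_closure (Or.inr ⟨n, a, m, rfl⟩)

noncomputable def mkRight (n : N) : M →+ Tensor A N M :=
  AddMonoidHom.mk' (Tensor.mk A N M n) (mk_add_right n)

@[simp] lemma mkRight_apply (n : N) (m : M) : mkRight n m = Tensor.mk A N M n m := rfl

lemma mk_sub_right (n : N) (m₁ m₂ : M) :
    Tensor.mk A N M n (m₁ - m₂) = Tensor.mk A N M n m₁ - Tensor.mk A N M n m₂ :=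
  map_sub (mkRight n) m₁ m₂

lemma mk_zero_right (n : N) : Tensor.mk A N M n 0 = 0 :=
  map_zero (mkRight n)

noncomputable def lift {G : Type x₁} [AddCommGroup G] (b : N → M → G)
    (h₁ : ∀ n₁ n₂ m, b (n₁ + n₂) m = b n₁ m + b n₂ m)
    (h₂ : ∀ n m₁ m₂, b n (m₁ + m₂) = b n m₁ + b n m₂)
    (h₃ : ∀ (a : A) n m, b (op a • n) m = b n (a • m)) :
    Tensor A N M →+ G :=
  QuotientAddGroup.lift _ (FreeAbelianGroup.lift fun p => b p.1 p.2) <| by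
    refine (AddSubgroup.closure_le _).mpr ?_
    rintro z ((⟨n₁, n₂, m, rfl⟩ | ⟨n, m₁, m₂, rfl⟩) | ⟨n, a, m, rfl⟩) <;>
      simp [FreeAbelianGroup.lift_apply_of, h₁, h₂, h₃]

@[simp] lemma lift_mk {G : Type x₁} [AddCommGroup G] (b : N → M → G)
    (h₁ : ∀ n₁ n₂ m, b (n₁ + n₂) m = b n₁ m + b n₂ m)
    (h₂ : ∀ n m₁ m₂, b n (m₁ + m₂) = b n m₁ + b n m₂)
    (h₃ : ∀ (a : A) n m, b (op a • n) m = b n (a • m)) (n : N) (m : M) :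
    lift b h₁ h₂ h₃ (Tensor.mk A N M n m) = b n m :=
  FreeAbelianGroup.lift_apply_of _ _

end Tensor

section Functoriality

variable {N : Type w} [AddCommGroup N] [PreMod Aᵐᵒᵖ N]
variable {N₂ : Type x₃} [AddCommGroup N₂] [PreMod Aᵐᵒᵖ N₂]
variable {M : Type w'} [AddCommGroup M] [PreMod A M]
variable {M₂ : Type x₁} [AddCommGroup M₂] [PreMod A M₂]
variable {M₃ : Type x₂} [AddCommGroup M₃] [PreMod A M₃]

noncomputable def lTensor (g : M →+ M₂) (hg : g ∈ LHom A M M₂) :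
    Tensor A N M →+ Tensor A N M₂ :=
  Tensor.map (AddMonoidHom.id N) g (fun _ _ => rfl) (LHom.map_smul hg)

noncomputable def rTensor (f : N →+ N₂) (hf : f ∈ LHom Aᵐᵒᵖ N N₂) :
    Tensor A N M →+ Tensor A N₂ M :=
  Tensor.map f (AddMonoidHom.id M) (fun a => LHom.map_smul hf (op a)) fun _ _ => rfl

@[simp] lemma lTensor_mk (g : M →+ M₂) (hg : g ∈ LHom A M M₂) (n : N) (m : M) :
    lTensor g hg (Tensor.mk A N M n m) = Tensor.mk A N M₂ n (g m) :=
  Tensor.map_mk _ _ _ _ n m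

@[simp] lemma rTensor_mk (f : N →+ N₂) (hf : f ∈ LHom Aᵐᵒᵖ N N₂) (n : N) (m : M) :
    rTensor f hf (Tensor.mk A N M n m) = Tensor.mk A N₂ M (f n) m :=
  Tensor.map_mk _ _ _ _ n m

lemma lTensor_lTensor (g : M →+ M₂) (hg : g ∈ LHom A M M₂) (g' : M₂ →+ M₃)
    (hg' : g' ∈ LHom A M₂ M₃) (x : Tensor A N M) :
    lTensor g' hg' (lTensor g hg x) = lTensor (g'.comp g) (LHom.comp_mem hg' hg) x := by
  rw [← AddMonoidHom.comp_apply]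
  congr 1
  ext
  simp

lemma lTensor_rTensor (g : M →+ M₂) (hg : g ∈ LHom A M M₂) (f : N →+ N₂)
    (hf : f ∈ LHom Aᵐᵒᵖ N N₂) (x : Tensor A N M) :
    lTensor g hg (rTensor f hf x) = rTensor f hf (lTensor g hg x) := by
  rw [← AddMonoidHom.comp_apply, ← AddMonoidHom.comp_apply (rTensor f hf)]
  congr 1
  ext
  simp

lemma lTensor_surjective {g : M →+ M₂} (hg : g ∈ LHom A M M₂) (hsurj : Function.Surjective g) :
    Function.Surjective (lTensor (N := N) g hg) := by
  intro z
  induction z using Tensor.induction_on with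
  | mk n m =>
    obtain ⟨m', rfl⟩ := hsurj m
    exact ⟨Tensor.mk A N M n m', lTensor_mk _ _ _ _⟩
  | add x y hx hy =>
    obtain ⟨x', rfl⟩ := hx
    obtain ⟨y', rfl⟩ := hy
    exact ⟨x' + y', map_add _ _ _⟩
  | neg x hx =>
    obtain ⟨x', rfl⟩ := hx
    exact ⟨-x', map_neg _ _⟩

lemma ker_lTensor_le_range {q : M →+ M₂} (hq : q ∈ LHom A M M₂) {p : M₂ →+ M₃}
    (hp : p ∈ LHom A M₂ M₃) (hsurj : Function.Surjective p) (hexact : p.ker ≤ q.range) :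
    (lTensor (N := N) p hp).ker ≤ (lTensor q hq).range := by
  classical
  set R := (lTensor (N := N) q hq).range
  -- On `N ⊗ M₃`, `n ⊗ z ↦ [n ⊗ σ z]` for any section `σ` of `p` is well defined modulo `R`.
  let σ : M₃ → M₂ := fun z => (hsurj z).choose
  have hσ : ∀ z, p (σ z) = z := fun z => (hsurj z).choose_spec
  have hmk : ∀ (n : N) (y₁ y₂ : M₂), p y₁ = p y₂ →
      (QuotientAddGroup.mk (Tensor.mk A N M₂ n y₁) : Tensor A N M₂ ⧸ R)
        = QuotientAddGroup.mk (Tensor.mk A N M₂ n y₂) := by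
    intro n y₁ y₂ hy
    rw [QuotientAddGroup.eq_iff_sub_mem, ← Tensor.mk_sub_right]
    obtain ⟨w, hw⟩ := hexact (show y₁ - y₂ ∈ p.ker by rw [AddMonoidHom.mem_ker, map_sub, hy,
      sub_self])
    exact ⟨Tensor.mk A N M n w, by rw [lTensor_mk, hw]⟩
  let L : Tensor A N M₃ →+ Tensor A N M₂ ⧸ R :=
    Tensor.lift (fun n z => QuotientAddGroup.mk (Tensor.mk A N M₂ n (σ z)))
      (fun n₁ n₂ z => by rw [Tensor.mk_add_left, QuotientAddGroup.mk_add])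
      (fun n z₁ z₂ => by
        rw [← QuotientAddGroup.mk_add, ← Tensor.mk_add_right]
        exact hmk n _ _ (by rw [map_add, hσ, hσ, hσ]))
      (fun a n z => by
        rw [Tensor.mk_op_smul]
        exact hmk n _ _ (by rw [LHom.map_smul hp, hσ, hσ]))
  have hL : L.comp (lTensor p hp) = QuotientAddGroup.mk' R := by
    ext n y
    exact hmk n _ _ (hσ _)
  intro x hx
  rw [← QuotientAddGroup.eq_zero_iff, ← QuotientAddGroup.mk'_apply, ← hL,
    AddMonoidHom.comp_apply, AddMonoidHom.mem_ker.mp hx, map_zero]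

end Functoriality

section FinFree

variable {N : Type w} [AddCommGroup N] [PreMod Aᵐᵒᵖ N] {k : ℕ} {u : Fin k → A}

/-- Identifies `N ⊗ (⊕ⱼ A uⱼ)` with `⊕ⱼ N uⱼ ⊆ Nᵏ`. -/
noncomputable def finFreeEval : Tensor A N (FinFree A u) →+ (Fin k → N) :=
  Tensor.lift (fun n x j => op (x j : A) • n)
    (fun n₁ n₂ x => funext fun j => smul_add' _ n₁ n₂)
    (fun n x₁ x₂ => funext fun j => by
      show op ((x₁ j : A) + x₂ j) • n = _
      rw [op_add]
      exact add_smul' _ _ n)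
    (fun a n x => funext fun j => by
      show op (x j : A) • op a • n = op (a * x j) • n
      rw [← mul_smul', ← op_mul])

@[simp] lemma finFreeEval_mk (n : N) (x : FinFree A u) :
    finFreeEval (Tensor.mk A N (FinFree A u) n x) = fun j => op (x j : A) • n :=
  Tensor.lift_mk _ _ _ _ _ _

lemma finFreeEval_rTensor {N₂ : Type x₁} [AddCommGroup N₂] [PreMod Aᵐᵒᵖ N₂] (f : N →+ N₂)
    (hf : f ∈ LHom Aᵐᵒᵖ N N₂) (z : Tensor A N (FinFree A u)) :
    finFreeEval (rTensor f hf z) = fun j => f (finFreeEval z j) := by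
  show (finFreeEval.comp (rTensor f hf)) z = (AddMonoidHom.compLeft f (Fin k)).comp finFreeEval z
  congr 1
  ext n x j
  simp [LHom.map_smul hf]

variable (hu : ∀ j, u j * u j = u j)

noncomputable def FinFree.basis (j : Fin k) : FinFree A u :=
  Pi.single j ⟨u j, hu j⟩

lemma FinFree.single_eq_smul_basis (j : Fin k) (c : ↥(rIdl A (u j))) :
    (Pi.single j c : FinFree A u) = (c : A) • FinFree.basis hu j := by
  funext j'
  rw [pi_smul_apply, FinFree.basis]
  rcases eq_or_ne j' j with rfl | h
  · rw [Pi.single_eq_same, Pi.single_eq_same]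
    exact Subtype.ext c.2.symm
  · rw [Pi.single_eq_of_ne h, Pi.single_eq_of_ne h, psmul_zero]

noncomputable def finFreeCoeval : (Fin k → N) →+ Tensor A N (FinFree A u) :=
  AddMonoidHom.mk' (fun v => ∑ j, Tensor.mk A N (FinFree A u) (op (u j) • v j)
    (FinFree.basis hu j)) fun v w => by
    rw [← Finset.sum_add_distrib]
    refine Finset.sum_congr rfl fun j _ => ?_
    rw [Pi.add_apply, smul_add', Tensor.mk_add_left]

lemma finFreeCoeval_apply (v : Fin k → N) :
    finFreeCoeval hu v = ∑ j, Tensor.mk A N (FinFree A u) (op (u j) • v j) (FinFree.basis hu j) :=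
  rfl

lemma finFreeCoeval_finFreeEval (z : Tensor A N (FinFree A u)) :
    finFreeCoeval hu (finFreeEval z) = z := by
  show ((finFreeCoeval hu).comp finFreeEval) z = AddMonoidHom.id _ z
  congr 1
  ext n x
  have hterm : ∀ j, Tensor.mk A N (FinFree A u) (op (u j) • op (x j : A) • n) (FinFree.basis hu j)
      = Tensor.mk A N (FinFree A u) n (Pi.single j (x j)) := fun j => by
    rw [← mul_smul', ← op_mul, show (x j : A) * u j = x j from (x j).2, Tensor.mk_op_smul,
      ← FinFree.single_eq_smul_basis]
  rw [AddMonoidHom.comp_apply, finFreeEval_mk, finFreeCoeval_apply, AddMonoidHom.id_apply]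
  simp only [hterm, ← Tensor.mkRight_apply, ← map_sum, Finset.univ_sum_single]

end FinFree

section Presentation

variable (N : Type w) [AddCommGroup N] [PreMod Aᵐᵒᵖ N]
variable {F : Type x₁} [AddCommGroup F] [PreMod A F]

/-- Vanishing of `Tor₁(N, F)` computed from the presentation `0 → ker π → P → F`. -/
def KerTensorInjective {P : Type x₂} [AddCommGroup P] [PreMod A P] (π : P →+ F)
    (hπ : π ∈ LHom A P F) : Prop :=
  letI := kerPreMod π hπ
  ∀ z : Tensor A N π.ker, lTensor π.ker.subtype (ker_subtype_mem_LHom π hπ) z = 0 → z = 0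

variable {N}

lemma KerTensorInjective.of_maps_over {P₁ : Type x₂} {P₂ : Type x₃}
    [AddCommGroup P₁] [PreMod A P₁] [AddCommGroup P₂] [PreMod A P₂]
    {π₁ : P₁ →+ F} (hπ₁ : π₁ ∈ LHom A P₁ F) {π₂ : P₂ →+ F} (hπ₂ : π₂ ∈ LHom A P₂ F)
    {s : P₁ →+ P₂} (hs : s ∈ LHom A P₁ P₂) {t : P₂ →+ P₁} (ht : t ∈ LHom A P₂ P₁)
    (hπs : ∀ x, π₂ (s x) = π₁ x) (hπt : ∀ y, π₁ (t y) = π₂ y)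
    (h : KerTensorInjective N π₂ hπ₂) : KerTensorInjective N π₁ hπ₁ := by
  let _ := kerPreMod π₁ hπ₁
  let _ := kerPreMod π₂ hπ₂
  have hι₁ := ker_subtype_mem_LHom π₁ hπ₁
  let sK : π₁.ker →+ π₂.ker := (s.comp π₁.ker.subtype).codRestrict π₂.ker fun x => by
    simp [hπs, AddMonoidHom.mem_ker.mp x.2]
  let tK : π₂.ker →+ π₁.ker := (t.comp π₂.ker.subtype).codRestrict π₁.ker fun y => by
    simp [hπt, AddMonoidHom.mem_ker.mp y.2]
  -- `t ∘ s` is the identity modulo `ker π₁`.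
  let δ : P₁ →+ π₁.ker := (t.comp s - AddMonoidHom.id P₁).codRestrict π₁.ker fun x => by
    simp [hπt, hπs]
  have hsK : sK ∈ LHom A π₁.ker π₂.ker := fun a x => Subtype.ext (LHom.map_smul hs a x)
  have htK : tK ∈ LHom A π₂.ker π₁.ker := fun a y => Subtype.ext (LHom.map_smul ht a y)
  have hδ : δ ∈ LHom A P₁ π₁.ker := fun a x => Subtype.ext
    (LHom.map_smul (LHom.sub_mem (LHom.comp_mem ht hs) fun _ _ => rfl) a x)
  have htsK : lTensor (N := N) (tK.comp sK) (LHom.comp_mem htK hsK)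
      = AddMonoidHom.id _ + (lTensor δ hδ).comp (lTensor π₁.ker.subtype hι₁) := by
    ext n x
    have hx : tK (sK x) = x + δ x := Subtype.ext (add_sub_cancel (x : P₁) _).symm
    simp [hx, Tensor.mk_add_right]
  intro z hz
  have hsz : lTensor sK hsK z = 0 := by
    refine h _ ?_
    rw [lTensor_lTensor]
    show lTensor (s.comp π₁.ker.subtype) (LHom.comp_mem hs hι₁) z = 0
    rw [← lTensor_lTensor _ hι₁ _ hs, hz, map_zero]
  calc z = lTensor (tK.comp sK) _ z - lTensor δ hδ (lTensor π₁.ker.subtype hι₁ z) := by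
        simp [htsK]
    _ = 0 := by rw [← lTensor_lTensor _ hsK _ htK, hsz, hz, map_zero, map_zero, sub_zero]

variable (N) {I : Type v} (e : I → A)

lemma tor1_eq_bot_iff_kerTensorInjective_covHom :
    Tor1 A e F N = ⊥ ↔ KerTensorInjective N (covHom A e F) (covHom_linear A e F) :=
  AddSubgroup.eq_bot_iff_forall _

end Presentation

section Cover

variable {I : Type v} (e : I → A) {F : Type x₁} {k : ℕ} (idx : Fin k → I)

noncomputable def toCover (m : Fin k → F) : FinFree A (fun j => e (idx j)) →+ ((I × F) →₀ A) :=
  AddMonoidHom.mk' (fun x => ∑ j, Finsupp.single (idx j, m j) (x j : A)) fun x y => by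
    rw [← Finset.sum_add_distrib]
    exact Finset.sum_congr rfl fun j _ => Finsupp.single_add _ _ _

lemma toCover_mem_LHom (m : Fin k → F) :
    toCover e idx m ∈ LHom A (FinFree A (fun j => e (idx j))) ((I × F) →₀ A) := by
  intro a x
  show ∑ j, Finsupp.single (idx j, m j) (a * x j) = a • ∑ j, Finsupp.single (idx j, m j) (x j : A)
  simp only [← finsupp_smul_single, ← smulHom_apply, map_sum]

variable [AddCommGroup F] {P : Type x₂} [AddCommGroup P] [PreMod A P]

noncomputable def ofCover (g : P →+ F) (hsurj : Function.Surjective g) : ((I × F) →₀ A) →+ P :=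
  Finsupp.liftAddHom fun p =>
    AddMonoidHom.mk' (fun a => (a * e p.1) • (hsurj p.2).choose) fun a b => by
      rw [add_mul, add_smul']

lemma ofCover_single (g : P →+ F) (hsurj : Function.Surjective g) (p : I × F) (a : A) :
    ofCover e g hsurj (Finsupp.single p a) = (a * e p.1) • (hsurj p.2).choose :=
  Finsupp.liftAddHom_apply_single _ _ _

lemma ofCover_mem_LHom (g : P →+ F) (hsurj : Function.Surjective g) :
    ofCover e g hsurj ∈ LHom A ((I × F) →₀ A) P := by
  intro a f
  induction f using Finsupp.induction with
  | zero => rw [psmul_zero, map_zero, psmul_zero]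
  | single_add p b f _ _ ih =>
    rw [smul_add', map_add, map_add, smul_add', ih, finsupp_smul_single, ofCover_single,
      ofCover_single, mul_assoc, mul_smul']

variable [PreMod A F]

lemma covHom_toCover (hu : ∀ j, e (idx j) * e (idx j) = e (idx j))
    {g : FinFree A (fun j => e (idx j)) →+ F} (hg : g ∈ LHom A _ F)
    (x : FinFree A (fun j => e (idx j))) :
    covHom A e F (toCover e idx (fun j => g (FinFree.basis hu j)) x) = g x := by
  have hterm : ∀ j, covHom A e F (Finsupp.single (idx j, g (FinFree.basis hu j)) (x j : A))
      = g (Pi.single j (x j)) := fun j => by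
    rw [covHom_single, show (x j : A) * e (idx j) = x j from (x j).2, ← LHom.map_smul hg]
    exact congrArg g (FinFree.single_eq_smul_basis hu j (x j)).symm
  show covHom A e F (∑ j, _) = g x
  rw [map_sum, Finset.sum_congr rfl fun j _ => hterm j, ← map_sum, Finset.univ_sum_single]

lemma map_ofCover {g : P →+ F} (hg : g ∈ LHom A P F) (hsurj : Function.Surjective g)
    (x : (I × F) →₀ A) : g (ofCover e g hsurj x) = covHom A e F x := by
  induction x using Finsupp.induction with
  | zero => rw [map_zero, map_zero, map_zero]
  | single_add p b f _ _ ih =>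
    rw [map_add, map_add, map_add, ih, ofCover_single, covHom_single, LHom.map_smul hg,
      (hsurj p.2).choose_spec]

lemma tor1_eq_bot_iff (N : Type w) [AddCommGroup N] [PreMod Aᵐᵒᵖ N] [EnoughIdems A e]
    {g : FinFree A (fun j => e (idx j)) →+ F} (hg : g ∈ LHom A _ F)
    (hsurj : Function.Surjective g) :
    Tor1 A e F N = ⊥ ↔ KerTensorInjective N g hg := by
  have hu : ∀ j, e (idx j) * e (idx j) = e (idx j) := fun j => EnoughIdems.idem (idx j)
  rw [tor1_eq_bot_iff_kerTensorInjective_covHom]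
  exact ⟨.of_maps_over _ _ (toCover_mem_LHom e idx _) (ofCover_mem_LHom e g hsurj)
      (covHom_toCover e idx hu hg) (map_ofCover e hg hsurj),
    .of_maps_over _ _ (ofCover_mem_LHom e g hsurj) (toCover_mem_LHom e idx _)
      (map_ofCover e hg hsurj) (covHom_toCover e idx hu hg)⟩

end Cover

section UnitalPi

variable {I : Type v} (e : I → A) [EnoughIdems A e]
variable {S : Type x₁} (N : S → Type x₂) [∀ α, AddCommGroup (N α)] [∀ α, PreMod Aᵐᵒᵖ (N α)]

/-- The product in unital right modules. -/
abbrev UnitalPi : Type max x₁ x₂ := ↥(RA Aᵐᵒᵖ (fun i => op (e i)) (∀ α, N α))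

noncomputable def UnitalPi.proj (α : S) : UnitalPi e N →+ N α :=
  AddMonoidHom.mk' (fun t => (t : ∀ β, N β) α) fun _ _ => rfl

lemma UnitalPi.proj_mem_LHom (α : S) : UnitalPi.proj e N α ∈ LHom Aᵐᵒᵖ (UnitalPi e N) (N α) :=
  fun _ _ => rfl

variable {e N}

lemma UnitalPi.tensor_finFree_eq_zero {k : ℕ} {u : Fin k → A} (hu : ∀ j, u j * u j = u j)
    {z : Tensor A (UnitalPi e N) (FinFree A u)}
    (h : ∀ α, rTensor (UnitalPi.proj e N α) (UnitalPi.proj_mem_LHom e N α) z = 0) : z = 0 := by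
  refine Function.LeftInverse.injective (finFreeCoeval_finFreeEval (N := UnitalPi e N) hu) ?_
  rw [map_zero]
  funext j
  refine Subtype.ext (funext fun α => ?_)
  have hα := congrFun (finFreeEval_rTensor _ (UnitalPi.proj_mem_LHom e N α) z) j
  rw [h α, map_zero] at hα
  exact hα.symm

lemma UnitalPi.exists_rTensor_proj_eq {k : ℕ} (idx : Fin k → I)
    (w : ∀ α, Tensor A (N α) (FinFree A fun j => e (idx j))) :
    ∃ W : Tensor A (UnitalPi e N) (FinFree A fun j => e (idx j)),
      ∀ α, rTensor (UnitalPi.proj e N α) (UnitalPi.proj_mem_LHom e N α) W = w α := by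
  have hu : ∀ j, e (idx j) * e (idx j) = e (idx j) := fun j => EnoughIdems.idem (idx j)
  let v : Fin k → UnitalPi e N := fun j =>
    ⟨op (e (idx j)) • fun α => finFreeEval (w α) j, AddSubgroup.subset_closure ⟨idx j, _, rfl⟩⟩
  refine ⟨∑ j, Tensor.mk A _ _ (v j) (FinFree.basis hu j), fun α => ?_⟩
  rw [map_sum]
  simp only [rTensor_mk]
  exact finFreeCoeval_finFreeEval hu (w α)

/-- Injectivity of `UnitalPi e N ⊗ K → ∏ (N α ⊗ K)` for `K` presented by finite sums of `A eᵢ`. -/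
lemma UnitalPi.tensor_eq_zero_of_presentation {K : Type x₃} [AddCommGroup K] [PreMod A K]
    {k₁ k₂ : ℕ} {idx₁ : Fin k₁ → I} {idx₂ : Fin k₂ → I}
    {q : (FinFree A fun j => e (idx₂ j)) →+ (FinFree A fun j => e (idx₁ j))}
    (hq : q ∈ LHom A _ _) {p : (FinFree A fun j => e (idx₁ j)) →+ K} (hp : p ∈ LHom A _ K)
    (hsurj : Function.Surjective p) (hexact : q.range = p.ker) {z : Tensor A (UnitalPi e N) K}
    (h : ∀ α, rTensor (UnitalPi.proj e N α) (UnitalPi.proj_mem_LHom e N α) z = 0) : z = 0 := by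
  obtain ⟨s, rfl⟩ := lTensor_surjective hp hsurj z
  have hlift : ∀ α, ∃ w, lTensor q hq w = rTensor _ (UnitalPi.proj_mem_LHom e N α) s :=
    fun α => ker_lTensor_le_range hq hp hsurj hexact.ge <| by
      rw [AddMonoidHom.mem_ker, lTensor_rTensor, h α]
  choose w hw using hlift
  obtain ⟨W, hW⟩ := UnitalPi.exists_rTensor_proj_eq idx₂ w
  have hs : s = lTensor q hq W := by
    rw [← sub_eq_zero]
    refine UnitalPi.tensor_finFree_eq_zero (fun j => EnoughIdems.idem (idx₁ j)) fun α => ?_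
    rw [map_sub, ← lTensor_rTensor, hW, hw, sub_self]
  have hpq : lTensor (N := UnitalPi e N) (p.comp q) (LHom.comp_mem hp hq) = 0 := by
    ext n x
    have hx : p (q x) = 0 := hexact.le ⟨x, rfl⟩
    simp [hx, Tensor.mk_zero_right]
  rw [hs, lTensor_lTensor, hpq, AddMonoidHom.zero_apply]

lemma KerTensorInjective.unitalPi {F : Type x₃} [AddCommGroup F] [PreMod A F]
    {P : Type x₄} [AddCommGroup P] [PreMod A P] {g : P →+ F} (hg : g ∈ LHom A P F)
    {k₁ k₂ : ℕ} {idx₁ : Fin k₁ → I} {idx₂ : Fin k₂ → I}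
    {d₀ : (FinFree A fun j => e (idx₁ j)) →+ P} (hd₀ : d₀ ∈ LHom A _ P) (h₀ : d₀.range = g.ker)
    {d₁ : (FinFree A fun j => e (idx₂ j)) →+ (FinFree A fun j => e (idx₁ j))}
    (hd₁ : d₁ ∈ LHom A _ _) (h₁ : d₁.range = d₀.ker)
    (h : ∀ α, KerTensorInjective (N α) g hg) : KerTensorInjective (UnitalPi e N) g hg := by
  let _ := kerPreMod g hg
  let p : (FinFree A fun j => e (idx₁ j)) →+ g.ker :=
    d₀.codRestrict g.ker fun x => h₀.le ⟨x, rfl⟩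
  have hp : p ∈ LHom A _ g.ker := fun a x => Subtype.ext (LHom.map_smul hd₀ a x)
  have hpsurj : Function.Surjective p := fun y => by
    obtain ⟨x, hx⟩ := (h₀.ge y.2 : (y : P) ∈ d₀.range)
    exact ⟨x, Subtype.ext hx⟩
  have hexact : d₁.range = p.ker := by
    rw [h₁]
    ext x
    simp [p]
  intro z hz
  refine UnitalPi.tensor_eq_zero_of_presentation hd₁ hp hpsurj hexact fun α => h α _ ?_
  rw [lTensor_rTensor, hz, map_zero]

end UnitalPi

end EIMod

theorem top_orthogonal_of_FPn_closed_under_unital_products_general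
    (A : Type u) [NonUnitalRing A] {I : Type v} (e : I → A) [EnoughIdems A e]
    (n : ℕ) (hn : 2 ≤ n)
    (F : Type u) [AddCommGroup F] [PreMod A F] (hF : IsFPn A e n F)
    (S : Type w) (N : S → Type u) [∀ α, AddCommGroup (N α)] [∀ α, PreMod Aᵐᵒᵖ (N α)]
    (hvanish : ∀ α, Tor1 A e F (N α) = ⊥) :
    Tor1 A e F (↥(RA Aᵐᵒᵖ (fun i => op (e i)) (∀ β, N β))) = ⊥ := by
  obtain ⟨k, ι, d, g, hg, hd₀, hd₁⟩ := hF
  rw [tor1_eq_bot_iff e (ι 0) _ g.2 hg]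
  exact KerTensorInjective.unitalPi g.2 (d 0).2 (hd₀ (by omega)) (d 1).2 (hd₁ 0 (by omega))
    fun α => (tor1_eq_bot_iff e (ι 0) _ g.2 hg).1 (hvanish α)

/-- Let `n ≥ 2` and `A` a ring with enough idempotents. The class of unital
right `A`-modules `N` with `Tor₁^A(N, F) = 0` for all (unital) left `A`-modules `F` of type
`FPₙ` in a given class is closed under products in the category of unital right `A`-modules:
if `Tor₁^A(N_α, F) = 0` for all `α`, then `Tor₁^A(∏^u_α N_α, F) = 0`. -/
theorem top_orthogonal_of_FPn_closed_under_unital_products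
    (A : Type u) [NonUnitalRing A] {I : Type v} (e : I → A) [EnoughIdems A e]
    (n : ℕ) (hn : 2 ≤ n)
    (F : Type u) [AddCommGroup F] [PreMod A F] (hF : IsFPn A e n F)
    (S : Type w) (N : S → Type u) [∀ α, AddCommGroup (N α)] [∀ α, PreMod Aᵐᵒᵖ (N α)]
    (hN : ∀ α, IsUnital Aᵐᵒᵖ (fun i => op (e i)) (N α))
    (hvanish : ∀ α, Tor1 A e F (N α) = ⊥) :
    Tor1 A e F (↥(RA Aᵐᵒᵖ (fun i => op (e i)) (∀ β, N β))) = ⊥ :=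
  top_orthogonal_of_FPn_closed_under_unital_products_general A e n hn F hF S N hvanish
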